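/- arXiv:2008.04539 — 2 statements merged into one kernel-verified Lean document; each statement's English description precedes it below -/
import Mathlib

section
/- If A is a 2-generic subset of ℕ (i.e., A meets or avoids every Σ⁰₂ set of binary strings) and Φ is a Turing functional such that Φ^A is total and nonrecursive, then there exists an initial segment σ of A such that for all strings τ extending σ: (1) for every x there is ρ ⊇ τ with Φ^ρ(x) defined, and (2) there exist ρ, π extending τ and some x with Φ^ρ(x) and Φ^π(x) both defined and unequal (a Φ-splitting above τ). -/
/-- Finite binary strings. -/
abbrev BStr := List Bool

/-- The length-`k` initial segment of an infinite sequence, as a finite string. -/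
def seg {α : Type} (A : ℕ → α) (k : ℕ) : List α := (List.range k).map A

/-- A Σ⁰₁ (r.e.) set of binary strings. -/
def Sigma01 (V : Set BStr) : Prop :=
  ∃ f : BStr → ℕ → Bool, Computable₂ f ∧ ∀ σ, σ ∈ V ↔ ∃ n, f σ n = true

/-- A Σ⁰₂ set of binary strings. -/
def Sigma02 (V : Set BStr) : Prop :=
  ∃ f : BStr → ℕ × ℕ → Bool, Computable₂ f ∧ ∀ σ, σ ∈ V ↔ ∃ m, ∀ n, f σ (m, n) = true

/-- `A` meets the set of strings `V`. -/
def Meets (A : ℕ → Bool) (V : Set BStr) : Prop := ∃ k, seg A k ∈ V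

/-- `A` avoids the set of strings `V`. -/
def Avoids (A : ℕ → Bool) (V : Set BStr) : Prop := ∃ k, ∀ τ, seg A k <+: τ → τ ∉ V

/-- `A` is 1-generic. -/
def OneGeneric (A : ℕ → Bool) : Prop := ∀ V, Sigma01 V → Meets A V ∨ Avoids A V

/-- `A` is 2-generic. -/
def TwoGeneric (A : ℕ → Bool) : Prop := ∀ V, Sigma02 V → Meets A V ∨ Avoids A V

/-- A Turing functional: a computable, oracle-use-monotone map from finite oracle
strings to partial values. -/
structure Functional (α β : Type) [Primcodable α] [Primcodable β] where
  φ : List α → ℕ → Option β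
  comp : Computable₂ φ
  mono : ∀ {σ τ : List α} {x : ℕ} {b : β}, σ <+: τ → φ σ x = some b → φ τ x = some b

/-- `Φ^A = B` (in particular `Φ^A` is total). -/
def FunApplies {α β : Type} [Primcodable α] [Primcodable β]
    (Φ : Functional α β) (A : ℕ → α) (B : ℕ → β) : Prop :=
  ∀ x, ∃ k, Φ.φ (seg A k) x = some (B x)

/-- Turing reducibility `B ≤_T A`. -/
def TuringLE {α β : Type} [Primcodable α] [Primcodable β] (B : ℕ → β) (A : ℕ → α) : Prop :=
  ∃ Φ : Functional α β, FunApplies Φ A B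

/-- Turing equivalence `B ≡_T A`. -/
def TuringEquiv {α β : Type} [Primcodable α] [Primcodable β] (B : ℕ → β) (A : ℕ → α) : Prop :=
  TuringLE B A ∧ TuringLE A B

/-- A tree: a set of strings closed under initial segments. -/
def IsTree {α : Type} (T : Set (List α)) : Prop := ∀ σ τ : List α, σ <+: τ → τ ∈ T → σ ∈ T

/-- A recursive tree. -/
def RecTree {α : Type} [Primcodable α] (T : Set (List α)) : Prop :=
  IsTree T ∧ ∃ f : List α → Bool, Computable f ∧ ∀ σ, σ ∈ T ↔ f σ = true

/-- Every string on the tree has a proper extension on the tree. -/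
def ExtendibleTree {α : Type} (T : Set (List α)) : Prop :=
  ∀ σ ∈ T, ∃ τ ∈ T, σ <+: τ ∧ σ ≠ τ

/-- The set `[T]` of infinite paths through the tree `T`. -/
def paths {α : Type} (T : Set (List α)) : Set (ℕ → α) := {X | ∀ k, seg X k ∈ T}

/-- A clopen subset of the path space: a finite union of basic cylinders. -/
def ClopenC {α : Type} (N : Set (ℕ → α)) : Prop :=
  ∃ F : Finset (List α), N = {X | ∃ σ ∈ F, seg X σ.length = σ}

/-- A Π⁰₁ class: the set of paths through a recursive tree. -/
def Pi01C {α : Type} [Primcodable α] (P : Set (ℕ → α)) : Prop := ∃ T, RecTree T ∧ P = paths T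

/-- A thin Π⁰₁ class: every Π⁰₁ subclass is the intersection with a clopen set. -/
def ThinPi01 {α : Type} [Primcodable α] (P : Set (ℕ → α)) : Prop :=
  Pi01C P ∧ ∀ Q, Pi01C Q → Q ⊆ P → ∃ N, ClopenC N ∧ Q = P ∩ N

/-- `A` is of thin-free degree: no set Turing equivalent to `A` belongs to a thin Π⁰₁ class. -/
def ThinFreeDegree (A : ℕ → Bool) : Prop :=
  ∀ B : ℕ → Bool, TuringEquiv B A → ∀ P : Set (ℕ → Bool), ThinPi01 P → B ∉ P

open Classical in
/-- The halting problem `0′`. -/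
noncomputable def K : ℕ → Bool := fun n =>
  if (Nat.Partrec.Code.eval (Denumerable.ofNat Nat.Partrec.Code n) n).Dom then true else false

/-- A recursive (limit-lemma) approximation of `A`. -/
def RecApprox (σs : ℕ → BStr) (A : ℕ → Bool) : Prop :=
  Computable σs ∧ ∀ n, ∃ s0, ∀ s ≥ s0, (σs s).take n = seg A n

/-- `τ` is an initial segment of `A`. -/
def InitSegOf {α : Type} (τ : List α) (A : ℕ → α) : Prop := τ = seg A τ.length

/-- A recursively enumerable set of natural numbers. -/
def REset (S : Set ℕ) : Prop :=
  ∃ f : ℕ → ℕ → Bool, Computable₂ f ∧ ∀ s, s ∈ S ↔ ∃ n, f s n = true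

/-- A Σ₁-correct approximation: every infinite r.e. set of stages contains a stage
whose approximating string is a true initial segment of `A`. -/
def SigmaOneCorrect (σs : ℕ → BStr) (A : ℕ → Bool) : Prop :=
  ∀ S : Set ℕ, REset S → S.Infinite → ∃ s ∈ S, InitSegOf (σs s) A

/-!
Both "some argument has no convergent extension" and "no `Φ`-splitting lies above" are Σ⁰₂
properties of a string, so the 2-generic `A` either meets or avoids each. Totality of `Φ^A`
rules out meeting the first. Meeting the second would make `Φ^A` computable: above a
nonsplitting initial segment of `A`, any convergent computation of `Φ(x)` gives the true value.
So `A` avoids both, and a long enough initial segment of `A` has the required property.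
-/

lemma seg_prefix_seg {α : Type} (A : ℕ → α) {i j : ℕ} (h : i ≤ j) : seg A i <+: seg A j := by
  have : (seg A j).take i = seg A i := by
    simp [seg, ← List.map_take, List.take_range, Nat.min_eq_left h]
  exact this ▸ List.take_prefix i (seg A j)

lemma forall_prefix_iff_forall_append {α : Type} {τ : List α} {P : List α → Prop} :
    (∀ ρ, τ <+: ρ → P ρ) ↔ ∀ δ, P (τ ++ δ) :=
  ⟨fun h δ => h _ (List.prefix_append τ δ), fun h _ ⟨δ, hδ⟩ => hδ ▸ h δ⟩

lemma sigma02_of_computable {α β : Type} [Primcodable α] [Primcodable β]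
    {p : BStr → α × β → Bool} (hp : Computable₂ p) :
    Sigma02 {σ | ∃ a, ∀ b, p σ (a, b) = true} := by
  -- codes that decode to nothing are useless witnesses for `∃` and vacuous instances of `∀`
  let f : BStr → ℕ × ℕ → Bool := fun σ mn =>
    Option.casesOn (Encodable.decode mn.1 : Option α) false fun a =>
      Option.casesOn (Encodable.decode mn.2 : Option β) true fun b => p σ (a, b)
  have hf : Computable₂ f :=
    Computable.option_casesOn (Computable.decode.comp (Computable.fst.comp Computable.snd))
      (Computable.const false)
      (Computable.option_casesOn
        (Computable.decode.comp (Computable.snd.comp (Computable.snd.comp Computable.fst)))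
        (Computable.const true)
        (hp.comp (Computable.fst.comp (Computable.fst.comp Computable.fst))
          (Computable.pair (Computable.snd.comp Computable.fst) Computable.snd)))
  refine ⟨f, hf, fun σ => ⟨fun ⟨a, ha⟩ => ⟨Encodable.encode a, fun n => ?_⟩, fun ⟨m, hm⟩ => ?_⟩⟩
  · rcases hn : (Encodable.decode n : Option β) with _ | b <;> simp [f, hn, ha]
  · rcases hm' : (Encodable.decode m : Option α) with _ | a
    · simpa [f, hm'] using hm 0
    · exact ⟨a, fun b => by simpa [f, hm'] using hm (Encodable.encode b)⟩

namespace Functional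

variable {α β : Type} [Primcodable α] [Primcodable β]

def DivergesAbove (Φ : Functional α β) : Set (List α) :=
  {τ | ∃ x, ∀ ρ, τ <+: ρ → Φ.φ ρ x = none}

def Nonsplitting (Φ : Functional α β) : Set (List α) :=
  {τ | ∀ ρ, τ <+: ρ → ∀ π, τ <+: π → ∀ x b c, Φ.φ ρ x = some b → Φ.φ π x = some c → b = c}

lemma sigma02_divergesAbove (Φ : Functional Bool β) : Sigma02 Φ.DivergesAbove := by
  have hp : Computable₂ fun (τ : BStr) (xδ : ℕ × BStr) => !(Φ.φ (τ ++ xδ.2) xδ.1).isSome :=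
    Primrec.not.to_comp.comp <| Primrec.option_isSome.to_comp.comp <| Φ.comp.comp
      (Primrec.list_append.to_comp.comp Computable.fst (Computable.snd.comp Computable.snd))
      (Computable.fst.comp Computable.snd)
  convert sigma02_of_computable hp using 1
  ext τ
  simp [DivergesAbove, forall_prefix_iff_forall_append]

lemma sigma02_nonsplitting [DecidableEq β] (Φ : Functional Bool β) :
    Sigma02 Φ.Nonsplitting := by
  let test : BStr → Unit × (BStr × BStr × ℕ) → Bool := fun τ q =>
    !(Φ.φ (τ ++ q.2.1) q.2.2.2).isSome || !(Φ.φ (τ ++ q.2.2.1) q.2.2.2).isSome ||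
      decide (Φ.φ (τ ++ q.2.1) q.2.2.2 = Φ.φ (τ ++ q.2.2.1) q.2.2.2)
  have hx : Computable fun q : BStr × Unit × (BStr × BStr × ℕ) => q.2.2.2.2 :=
    Computable.snd.comp (Computable.snd.comp (Computable.snd.comp Computable.snd))
  have hρ : Computable fun q : BStr × Unit × (BStr × BStr × ℕ) =>
      Φ.φ (q.1 ++ q.2.2.1) q.2.2.2.2 :=
    Φ.comp.comp (Primrec.list_append.to_comp.comp Computable.fst
      (Computable.fst.comp (Computable.snd.comp Computable.snd))) hx
  have hπ : Computable fun q : BStr × Unit × (BStr × BStr × ℕ) =>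
      Φ.φ (q.1 ++ q.2.2.2.1) q.2.2.2.2 :=
    Φ.comp.comp (Primrec.list_append.to_comp.comp Computable.fst
      (Computable.fst.comp (Computable.snd.comp (Computable.snd.comp Computable.snd)))) hx
  have htest : Computable₂ test :=
    Primrec.or.to_comp.comp
      (Primrec.or.to_comp.comp
        (Primrec.not.to_comp.comp <| Primrec.option_isSome.to_comp.comp hρ)
        (Primrec.not.to_comp.comp <| Primrec.option_isSome.to_comp.comp hπ))
      (Primrec.eq.decide.to_comp.comp hρ hπ)
  convert sigma02_of_computable htest using 1
  ext τ
  simp only [Nonsplitting, forall_prefix_iff_forall_append, Set.mem_ofPred_eq, Unique.exists_iff,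
    Prod.forall, test]
  refine forall_congr' fun δ₁ => forall_congr' fun δ₂ => forall_congr' fun x => ?_
  rcases Φ.φ (τ ++ δ₁) x with _ | b <;> rcases Φ.φ (τ ++ δ₂) x with _ | c <;> simp

end Functional

namespace FunApplies

variable {α β : Type} [Primcodable α] [Primcodable β] {Φ : Functional α β} {A : ℕ → α}
  {B : ℕ → β}

lemma exists_append_eq (h : FunApplies Φ A B) (k x : ℕ) :
    ∃ δ, Φ.φ (seg A k ++ δ) x = some (B x) := by
  obtain ⟨k', hk'⟩ := h x
  obtain ⟨δ, hδ⟩ := seg_prefix_seg A (le_max_left k k')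
  exact ⟨δ, hδ ▸ Φ.mono (seg_prefix_seg A (le_max_right k k')) hk'⟩

lemma seg_notMem_divergesAbove (h : FunApplies Φ A B) (k : ℕ) :
    seg A k ∉ Φ.DivergesAbove := by
  rintro ⟨x, hx⟩
  obtain ⟨δ, hδ⟩ := h.exists_append_eq k x
  simp [hx _ (List.prefix_append _ δ)] at hδ

lemma computable_of_seg_mem_nonsplitting (h : FunApplies Φ A B) {k : ℕ}
    (hk : seg A k ∈ Φ.Nonsplitting) : Computable B := by
  let search : ℕ → ℕ → Option β := fun x n =>
    (Encodable.decode n : Option (List α)).bind fun δ => Φ.φ (seg A k ++ δ) x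
  have hsearch : Computable₂ search :=
    Computable.option_bind (Computable.decode.comp Computable.snd)
      (Φ.comp.comp (Primrec.list_append.to_comp.comp (Computable.const _) Computable.snd)
        (Computable.fst.comp Computable.fst))
  refine Partrec.of_eq_tot (Partrec.rfindOpt hsearch) fun x => ?_
  obtain ⟨δ, hδ⟩ := h.exists_append_eq k x
  have hdom : (Nat.rfindOpt (search x)).Dom :=
    Nat.rfindOpt_dom.2 ⟨Encodable.encode δ, B x, by simp [search, hδ]⟩
  obtain ⟨n, hn⟩ := Nat.rfindOpt_spec (Part.get_mem hdom)
  obtain ⟨δ', -, hδ'⟩ := Option.bind_eq_some_iff.mp hn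
  have hget := hk _ (List.prefix_append _ δ') _ (List.prefix_append _ δ) x _ _ hδ' hδ
  exact hget ▸ Part.get_mem hdom

end FunApplies

lemma TwoGeneric.avoids {A : ℕ → Bool} (hA : TwoGeneric A) {V : Set BStr} (hV : Sigma02 V)
    (hnot : ∀ k, seg A k ∉ V) : Avoids A V :=
  (hA V hV).resolve_left fun ⟨k, hk⟩ => hnot k hk

/-- If `A` is 2-generic and `Φ^A = B` is total and nonrecursive, then some
initial segment `σ = A↾k` of `A` is such that above every `τ ⊇ σ` computations of `Φ`
converge densely and `Φ`-splittings exist. -/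
theorem two_generic_splitting (A : ℕ → Bool) (Φ : Functional Bool Bool) (B : ℕ → Bool)
    (hA : TwoGeneric A) (hTot : FunApplies Φ A B) (hNR : ¬ Computable B) :
    ∃ k : ℕ, ∀ τ : BStr, seg A k <+: τ →
      (∀ x : ℕ, ∃ ρ : BStr, τ <+: ρ ∧ ∃ b : Bool, Φ.φ ρ x = some b) ∧
      (∃ ρ π : BStr, ∃ x : ℕ, ∃ b c : Bool, τ <+: ρ ∧ τ <+: π ∧
        Φ.φ ρ x = some b ∧ Φ.φ π x = some c ∧ b ≠ c) := by
  obtain ⟨k₁, hk₁⟩ := hA.avoids Φ.sigma02_divergesAbove hTot.seg_notMem_divergesAbove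
  obtain ⟨k₂, hk₂⟩ := hA.avoids Φ.sigma02_nonsplitting
    fun _ hk => hNR (hTot.computable_of_seg_mem_nonsplitting hk)
  refine ⟨max k₁ k₂, fun τ hτ => ⟨fun x => ?_, ?_⟩⟩
  · have hconv := hk₁ τ ((seg_prefix_seg A (le_max_left _ _)).trans hτ)
    simp only [Functional.DivergesAbove, Set.mem_ofPred_eq, not_exists, not_forall] at hconv
    obtain ⟨ρ, hρ, hne⟩ := hconv x
    exact ⟨ρ, hρ, Option.ne_none_iff_exists'.mp hne⟩
  · have hsplit := hk₂ τ ((seg_prefix_seg A (le_max_right _ _)).trans hτ)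
    simp only [Functional.Nonsplitting, Set.mem_ofPred_eq, not_forall] at hsplit
    obtain ⟨ρ, hρ, π, hπ, x, b, c, hb, hc, hbc⟩ := hsplit
    exact ⟨ρ, π, x, b, c, hρ, hπ, hb, hc, hbc⟩
end

section
/- For the tree T constructed from a Σ₁-correct approximation of a 1-generic A <_T 0′ with distinguished path C (C^d = A): if U is a recursive subtree of T with C ∉ [U], then [U] is finite and there is a clopen set N with [U] = [T] ∩ N. -/
/-- The three-letter alphabet `{0,1,B}`: `none` is the blank symbol `B`. -/
abbrev Sym3 := Option Bool

/-- Delete all blanks `B` from a string over `{0,1,B}`. -/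
def delB (τ : List Sym3) : BStr := τ.filterMap id

/-- The level-marker function `l(s)` of the construction:
`l(0)=0`, `l(1)=|σ_0|+1`, `l(s+2)=l(s+1)+|σ_{s+1}|-|σ_s|`. -/
def lvl (σs : ℕ → BStr) : ℕ → ℕ
  | 0 => 0
  | 1 => (σs 0).length + 1
  | (s+2) => lvl σs (s+1) + ((σs (s+1)).length - (σs s).length)

/-- The stage during which level `n` of the tree is constructed:
the `s` with `l(s) ≤ n < l(s+1)`. -/
def stg (σs : ℕ → BStr) (n : ℕ) : ℕ :=
  ((List.range (n + 2)).filter (fun s => lvl σs (s + 1) ≤ n)).length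

/-- The tree `T ⊆ {0,1,B}^{<ω}` constructed from the approximation `(σ_s)`:
a string `τ` at a level built during stage `s` whose `B`-deleted part is an
initial segment of `σ_s` gets both children `0` and `1`; all other strings are
extended only by the blank `B`. -/
inductive TreeT (σs : ℕ → BStr) : List Sym3 → Prop
  | nil : TreeT σs []
  | ext (τ : List Sym3) (a : Sym3) : TreeT σs τ →
      (if delB τ <+: σs (stg σs τ.length) then a ≠ none else a = none) →
      TreeT σs (τ ++ [a])

section Stmt11Aux

lemma seg_length {α : Type} (A : ℕ → α) (k : ℕ) : (seg A k).length = k := by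
  simp [seg]

lemma seg_succ {α : Type} (A : ℕ → α) (k : ℕ) : seg A (k + 1) = seg A k ++ [A k] := by
  simp [seg, List.range_succ]

lemma seg_prefix {α : Type} (A : ℕ → α) {k j : ℕ} (h : k ≤ j) : seg A k <+: seg A j := by
  rw [List.prefix_iff_eq_take, seg_length, seg, seg, ← List.map_take, List.take_range,
    Nat.min_eq_left h]

lemma seg_take {α : Type} (A : ℕ → α) {k j : ℕ} (h : k ≤ j) : (seg A j).take k = seg A k := by
  have := List.prefix_iff_eq_take.mp (seg_prefix A h)
  rw [seg_length] at this
  exact this.symm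

lemma seg_ext {α : Type} {X Y : ℕ → α} {k : ℕ} (h : ∀ i < k, X i = Y i) :
    seg X k = seg Y k :=
  List.map_congr_left (fun a ha => h a (List.mem_range.mp ha))

lemma seg_eq_apply {α : Type} {X Y : ℕ → α} {k : ℕ} (h : seg X k = seg Y k) {i : ℕ}
    (hi : i < k) : X i = Y i := by
  have h1 : (seg X k)[i]'(by simp [seg_length]; omega) = (seg Y k)[i]'(by simp [seg_length]; omega) :=
    List.getElem_of_eq h _
  simpa [seg] using h1

lemma delB_append (l₁ l₂ : List Sym3) : delB (l₁ ++ l₂) = delB l₁ ++ delB l₂ := by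
  simp [delB]

lemma delB_mono {l₁ l₂ : List Sym3} (h : l₁ <+: l₂) : delB l₁ <+: delB l₂ := by
  obtain ⟨t, rfl⟩ := h
  exact ⟨delB t, (delB_append _ _).symm⟩

lemma delB_some (l : List Sym3) (b : Bool) : delB (l ++ [some b]) = delB l ++ [b] := by
  simp [delB]

lemma delB_none (l : List Sym3) : delB (l ++ [none]) = delB l := by
  simp [delB]

lemma delB_length_le (l : List Sym3) : (delB l).length ≤ l.length :=
  List.length_filterMap_le _ _

lemma treeT_snoc {σs : ℕ → BStr} {l : List Sym3} (h : TreeT σs l) :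
    ∀ τ a, l = τ ++ [a] →
      TreeT σs τ ∧ (if delB τ <+: σs (stg σs τ.length) then a ≠ none else a = none) := by
  cases h with
  | nil =>
    intro τ a ha
    exact absurd ha.symm (by simp)
  | ext τ' a' h' hc =>
    intro τ a ha
    obtain ⟨h1, h2⟩ := List.append_inj' ha rfl
    subst h1
    have : a' = a := by simpa using h2
    subst this
    exact ⟨h', hc⟩

lemma path_step {σs : ℕ → BStr} {X : ℕ → Sym3}
    (hX : ∀ k, TreeT σs (seg X k)) (k : ℕ) :
    if delB (seg X k) <+: σs (stg σs k) then X k ≠ none else X k = none := by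
  have h := (treeT_snoc (hX (k + 1)) (seg X k) (X k) (seg_succ X k)).2
  rwa [seg_length] at h

lemma lvl_le_succ (σs : ℕ → BStr) (s : ℕ) : lvl σs s ≤ lvl σs (s + 1) := by
  match s with
  | 0 => exact Nat.zero_le _
  | s + 1 => exact Nat.le_add_right _ _

lemma lvl_mono (σs : ℕ → BStr) : Monotone (lvl σs) :=
  monotone_nat_of_le_succ (lvl_le_succ σs)

lemma lvl_lower (σs : ℕ → BStr) (hinc : ∀ s, (σs s).length < (σs (s + 1)).length) (s : ℕ) :
    s + 1 ≤ lvl σs (s + 1) := by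
  induction s with
  | zero => simp [lvl]
  | succ s ih =>
    have h := hinc s
    have h2 : lvl σs (s + 1 + 1) = lvl σs (s + 1) + ((σs (s + 1)).length - (σs s).length) := rfl
    omega

lemma stg_ge (σs : ℕ → BStr) {s0 n : ℕ} (h : lvl σs (s0 + 1) ≤ n) (hn : s0 ≤ n) :
    s0 ≤ stg σs n := by
  unfold stg
  have hpre : List.range s0 <+: List.range (n + 2) := by
    rw [List.prefix_iff_eq_take, List.take_range, List.length_range]
    congr 1
    omega
  have hfil := hpre.filter (fun s => decide (lvl σs (s + 1) ≤ n))
  have heq : (List.range s0).filter (fun s => decide (lvl σs (s + 1) ≤ n)) = List.range s0 := by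
    rw [List.filter_eq_self]
    intro a ha
    have ha' := List.mem_range.mp ha
    simp only [decide_eq_true_eq]
    exact le_trans (lvl_mono σs (by omega : a + 1 ≤ s0 + 1)) h
  have hlen := hfil.length_le
  rw [heq, List.length_range] at hlen
  exact hlen

lemma delBC_prefix {A : ℕ → Bool} {C : ℕ → Sym3}
    (hCd : ∀ n, ∃ k, delB (seg C k) = seg A n) (k : ℕ) :
    delB (seg C k) = seg A (delB (seg C k)).length := by
  obtain ⟨k', hk'⟩ := hCd k
  have hlen : (delB (seg C k)).length ≤ k := by
    have := delB_length_le (seg C k)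
    rwa [seg_length] at this
  rcases le_total k k' with h | h
  · have hp : delB (seg C k) <+: seg A k := hk' ▸ delB_mono (seg_prefix C h)
    calc delB (seg C k) = (seg A k).take (delB (seg C k)).length :=
          List.prefix_iff_eq_take.mp hp
    _ = seg A (delB (seg C k)).length := seg_take A hlen
  · have hp : seg A k <+: delB (seg C k) := hk' ▸ delB_mono (seg_prefix C h)
    have heq : seg A k = delB (seg C k) :=
      hp.eq_of_length_le (by rw [seg_length]; exact hlen)
    rw [← heq, seg_length]

end Stmt11Aux

/-- for the constructed tree `T` with its distinguished path `C`
(`C^d = A`), every recursive subtree `U` of `T` with `C ∉ [U]` has `[U]` finite and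
`[U] = [T] ∩ N` for some clopen `N`. -/
theorem treeT_subtree_without_C (A : ℕ → Bool) (σs : ℕ → BStr) (hA : OneGeneric A)
    (hle : TuringLE A K) (hlt : ¬ TuringLE K A)
    (happ : RecApprox σs A) (hcor : SigmaOneCorrect σs A)
    (hinc : ∀ s, (σs s).length < (σs (s + 1)).length)
    (C : ℕ → Sym3) (hC : C ∈ paths {τ : List Sym3 | TreeT σs τ})
    (hCinf : {n : ℕ | C n ≠ none}.Infinite)
    (hCd : ∀ n : ℕ, ∃ k : ℕ, delB (seg C k) = seg A n)
    (U : Set (List Sym3)) (hU : RecTree U) (hUT : U ⊆ {τ : List Sym3 | TreeT σs τ})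
    (hCU : C ∉ paths U) :
    (paths U).Finite ∧
    ∃ N : Set (ℕ → Sym3), ClopenC N ∧ paths U = paths {τ : List Sym3 | TreeT σs τ} ∩ N := by
  classical
  obtain ⟨n, hCn⟩ : ∃ n, seg C n ∉ U := by
    by_contra h
    push_neg at h
    exact hCU h
  obtain ⟨s0, hs0⟩ := happ.2 n
  set N : ℕ := max n (lvl σs (s0 + 1)) with hNdef
  have hnN : n ≤ N := le_max_left _ _
  have hs0N : lvl σs (s0 + 1) ≤ N := le_max_right _ _
  have hs0N' : s0 ≤ N := le_trans (Nat.le_of_succ_le (lvl_lower σs hinc s0)) hs0N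
  -- Key isolation lemma: every path of T that differs from C below n is blank from N on.
  have key : ∀ Y : ℕ → Sym3, Y ∈ paths {τ : List Sym3 | TreeT σs τ} →
      seg Y n ≠ seg C n → ∀ j, N ≤ j → Y j = none := by
    intro Y hY hYn j hj
    have hex : ∃ i, Y i ≠ C i := by
      by_contra h
      push_neg at h
      exact hYn (seg_ext (fun i _ => h i))
    set k := Nat.find hex with hk
    have hYk : Y k ≠ C k := Nat.find_spec hex
    have hmin : ∀ i < k, Y i = C i := fun i hi => not_not.mp (Nat.find_min hex hi)
    have hkn : k < n := by
      by_contra hc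
      push_neg at hc
      exact hYn (seg_ext (fun i hi => hmin i (lt_of_lt_of_le hi hc)))
    have hsegk : seg Y k = seg C k := seg_ext hmin
    have hYstep := path_step (fun m => hY m) k
    have hCstep := path_step (fun m => hC m) k
    rw [hsegk] at hYstep
    by_cases hcond : delB (seg C k) <+: σs (stg σs k)
    · rw [if_pos hcond] at hYstep hCstep
      obtain ⟨y, hy⟩ := Option.ne_none_iff_exists'.mp hYstep
      obtain ⟨c, hc⟩ := Option.ne_none_iff_exists'.mp hCstep
      set m := (delB (seg C k)).length with hm
      have hdBk : delB (seg C k) = seg A m := delBC_prefix hCd k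
      have hdC1 : delB (seg C (k + 1)) = seg A m ++ [c] := by
        rw [seg_succ, hc, delB_some, hdBk]
      have hdC1' : delB (seg C (k + 1)) = seg A (delB (seg C (k + 1))).length :=
        delBC_prefix hCd (k + 1)
      have hlen1 : (delB (seg C (k + 1))).length = m + 1 := by
        rw [hdC1]
        simp [seg_length]
      have hcA : c = A m := by
        have e : seg A m ++ [c] = seg A (m + 1) := by rw [← hdC1, hdC1', hlen1]
        rw [seg_succ] at e
        simpa using e
      have hym : y = !(A m) := by
        have hyc : y ≠ c := by
          intro h
          exact hYk (by rw [hy, hc, h])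
        rw [hcA] at hyc
        exact Bool.eq_not_iff.mpr hyc
      have hmk : m ≤ k := by
        have := delB_length_le (seg C k)
        rwa [seg_length] at this
      have hmn : m < n := lt_of_le_of_lt hmk hkn
      have hdY1 : delB (seg Y (k + 1)) = seg A m ++ [!(A m)] := by
        rw [seg_succ, hsegk, hy, hym, delB_some, hdBk]
      have hjk : k + 1 ≤ j := by omega
      have hpre : seg A m ++ [!(A m)] <+: delB (seg Y j) :=
        hdY1 ▸ delB_mono (seg_prefix Y hjk)
      have hstep := path_step (fun m => hY m) j
      have hcondj : ¬ delB (seg Y j) <+: σs (stg σs j) := by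
        intro hcj
        have hsj : s0 ≤ stg σs j := stg_ge σs (hs0N.trans hj) (hs0N'.trans hj)
        have htake := hs0 (stg σs j) hsj
        have hpA : seg A n <+: σs (stg σs j) := by
          rw [← htake]
          exact List.take_prefix _ _
        have hp2 : seg A m ++ [!(A m)] <+: σs (stg σs j) := hpre.trans hcj
        have hcomp : seg A m ++ [!(A m)] <+: seg A n :=
          List.prefix_of_prefix_length_le hp2 hpA (by simp [seg_length]; omega)
        have hcomp2 : seg A m ++ [A m] <+: seg A n := by
          rw [← seg_succ]
          exact seg_prefix A hmn
        have e1 := List.prefix_iff_eq_take.mp hcomp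
        have e2 := List.prefix_iff_eq_take.mp hcomp2
        simp only [List.length_append, seg_length, List.length_cons, List.length_nil] at e1 e2
        have := e1.trans e2.symm
        simp at this
      rw [if_neg hcondj] at hstep
      exact hstep
    · rw [if_neg hcond] at hYstep hCstep
      exact absurd (hYstep.trans hCstep.symm) hYk
  -- Any path of T agreeing with a path of U up to level N equals it.
  have key2 : ∀ X Y : ℕ → Sym3, X ∈ paths {τ : List Sym3 | TreeT σs τ} → Y ∈ paths U →
      seg X N = seg Y N → X = Y := by
    intro X Y hXT hYU hXY
    have hYT : Y ∈ paths {τ : List Sym3 | TreeT σs τ} := fun k => hUT (hYU k)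
    have hYn : seg Y n ≠ seg C n := fun h => hCn (h ▸ hYU n)
    have hXn : seg X n = seg Y n := by
      have := congrArg (List.take n) hXY
      rwa [seg_take X hnN, seg_take Y hnN] at this
    have hXn' : seg X n ≠ seg C n := by
      rw [hXn]
      exact hYn
    funext j
    rcases lt_or_ge j N with hjN | hjN
    · exact seg_eq_apply hXY hjN
    · rw [key X hXT hXn' j hjN, key Y hYT hYn j hjN]
  have hfin : (paths U).Finite := by
    have hinj : Set.InjOn (fun Y : ℕ → Sym3 => fun i : Fin N => Y i) (paths U) := by
      intro X hX Y hY h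
      apply key2 X Y (fun k => hUT (hX k)) hY
      exact seg_ext (fun i hi => congrFun h ⟨i, hi⟩)
    exact Set.Finite.of_finite_image (Set.toFinite _) hinj
  refine ⟨hfin, ?_⟩
  refine ⟨{X | ∃ σ ∈ hfin.toFinset.image (fun Y => seg Y N), seg X σ.length = σ},
    ⟨_, rfl⟩, ?_⟩
  ext X
  constructor
  · intro hX
    refine ⟨fun k => hUT (hX k), ⟨seg X N, ?_, ?_⟩⟩
    · exact Finset.mem_image.mpr ⟨X, hfin.mem_toFinset.mpr hX, rfl⟩
    · rw [seg_length]
  · rintro ⟨hXT, σ, hσ, hXσ⟩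
    obtain ⟨Y, hY, rfl⟩ := Finset.mem_image.mp hσ
    rw [seg_length] at hXσ
    have hXYeq := key2 X Y hXT (hfin.mem_toFinset.mp hY) hXσ
    rw [hXYeq]
    exact hfin.mem_toFinset.mp hY
end
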